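/- Let a > 0 and b > 0, and let p(z) = b^a·z^(a−1)·exp(−b·z)/Γ(a) for z > 0, where Γ is the Gamma function. Then for every z > 0, the second derivative of z ↦ (z/b)·p(z) at z equals the first derivative of z ↦ (a/b − z)·p(z) at z; i.e., p satisfies the steady-state Fokker–Planck equation (1/2)·d²/dz²(σ²(z)p(z)) = d/dz(μ(z)p(z)) on (0,∞) with μ(z) = −(z − a/b) and σ²(z) = 2z/b. -/

import Mathlib

/-!
The Gamma density has zero probability flux on `(0, ∞)`: `((z / b) p)' = (a / b - z) p`, since
`p' = ((a - 1) / z - b) p` and hence `((z / b) p)' = p / b + (z / b) p' = (a / b - z) p`.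
Differentiating this first-order identity once more gives the steady-state Fokker–Planck equation.
-/

open Real Filter Topology

lemma hasDerivAt_rpow_mul_exp_neg_mul (c b : ℝ) {x : ℝ} (hx : 0 < x) :
    HasDerivAt (fun y => y ^ c * exp (-b * y)) ((c * x ^ (c - 1) - b * x ^ c) * exp (-b * x)) x := by
  have hpow : HasDerivAt (fun y => y ^ c) (c * x ^ (c - 1)) x :=
    hasDerivAt_rpow_const (Or.inl hx.ne')
  have hexp : HasDerivAt (fun y => exp (-b * y)) (exp (-b * x) * -b) x := by
    simpa using ((hasDerivAt_id x).const_mul (-b)).exp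
  exact (hpow.mul hexp).congr_deriv (by ring)

lemma hasDerivAt_gamma_flux (a b : ℝ) (hb : b ≠ 0) {z : ℝ} (hz : 0 < z) :
    HasDerivAt (fun z => (z / b) * (b ^ a * z ^ (a - 1) * exp (-b * z) / Gamma a))
      ((a / b - z) * (b ^ a * z ^ (a - 1) * exp (-b * z) / Gamma a)) z := by
  have hp : HasDerivAt (fun z => b ^ a * z ^ (a - 1) * exp (-b * z) / Gamma a)
      (b ^ a * (((a - 1) * z ^ (a - 1 - 1) - b * z ^ (a - 1)) * exp (-b * z)) / Gamma a) z := by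
    simpa only [mul_assoc] using
      ((hasDerivAt_rpow_mul_exp_neg_mul (a - 1) b hz).const_mul (b ^ a)).div_const (Gamma a)
  have hid : HasDerivAt (fun z => z / b) (1 / b) z := (hasDerivAt_id z).div_const b
  refine (hid.mul hp).congr_deriv ?_
  rw [rpow_sub_one hz.ne' (a - 1)]
  field_simp
  ring

theorem gamma_fokker_planck_general (a b : ℝ) (hb : 0 < b) :
    ∀ z : ℝ, 0 < z →
      deriv (deriv
        (fun z => (z / b) * (b ^ a * z ^ (a - 1) * Real.exp (-b * z) / Real.Gamma a))) z =
      deriv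
        (fun z => (a / b - z) * (b ^ a * z ^ (a - 1) * Real.exp (-b * z) / Real.Gamma a)) z := by
  intro z hz
  have hflux : deriv (fun z => (z / b) * (b ^ a * z ^ (a - 1) * exp (-b * z) / Gamma a))
      =ᶠ[𝓝 z] fun z => (a / b - z) * (b ^ a * z ^ (a - 1) * exp (-b * z) / Gamma a) := by
    filter_upwards [Ioi_mem_nhds hz] with x hx
    exact (hasDerivAt_gamma_flux a b hb.ne' hx).deriv
  exact hflux.deriv_eq

/-- Steady-state Fokker–Planck equation for the Gamma entry of Table I:
with `p(z) = b^a z^(a-1) e^{-bz}/Γ(a)`, `μ(z) = -(z - a/b)` and `σ²(z) = 2z/b`,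
we have `(1/2)·(σ²p)'' = (μp)'` on `(0,∞)`, i.e. `((z/b)·p)'' = ((a/b - z)·p)'`. -/
theorem gamma_fokker_planck (a b : ℝ) (ha : 0 < a) (hb : 0 < b) :
    ∀ z : ℝ, 0 < z →
      deriv (deriv
        (fun z => (z / b) * (b ^ a * z ^ (a - 1) * Real.exp (-b * z) / Real.Gamma a))) z =
      deriv
        (fun z => (a / b - z) * (b ^ a * z ^ (a - 1) * Real.exp (-b * z) / Real.Gamma a)) z :=
  gamma_fokker_planck_general a b hb
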